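/- (Order of the coefficient ideal.) Let k be a field of characteristic zero, I a nonzero ideal of R = k[x_1,…,x_n], and p ∈ k^n a point with ord_p(I) = a ≥ 1. Then the coefficient ideal satisfies ord_p(C(I,a)) = a!. -/

import Mathlib

open MvPolynomial

/-- The derivative ideal: the ideal generated by `I` together with all first partial
derivatives of its elements. -/
noncomputable def derivIdeal {k : Type*} [CommSemiring k] {σ : Type*}
    (I : Ideal (MvPolynomial σ k)) : Ideal (MvPolynomial σ k) :=
  I ⊔ Ideal.span {g | ∃ f ∈ I, ∃ i : σ, g = pderiv i f}

/-- The order of a nonzero polynomial at a point `p`: the smallest total degree of a monomial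
appearing in the shifted polynomial `f(x+p)`. -/
noncomputable def polyOrdAt {k : Type*} [CommSemiring k] {σ : Type*} (p : σ → k)
    (f : MvPolynomial σ k) : ℕ :=
  sInf {m | ∃ d ∈ (aeval (fun i => X i + C (p i)) f : MvPolynomial σ k).support,
    (d.sum fun _ e => e) = m}

/-- The order of a nonzero ideal at a point: `min {ord_p f : 0 ≠ f ∈ I}`. -/
noncomputable def idealOrdAt {k : Type*} [CommSemiring k] {σ : Type*} (p : σ → k)
    (I : Ideal (MvPolynomial σ k)) : ℕ :=
  sInf {m | ∃ f ∈ I, f ≠ 0 ∧ polyOrdAt p f = m}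

/-- The coefficient ideal `C(I,a) = Σ D^{a-1}(I)^{b₁} ⋯ D⁰(I)^{b_a}`, the sum running over
all tuples `(b₁,…,b_a)` of nonnegative integers with `Σ i·b_i ≥ a!`. -/
noncomputable def coeffIdeal {k : Type*} [CommSemiring k] {σ : Type*}
    (I : Ideal (MvPolynomial σ k)) (a : ℕ) : Ideal (MvPolynomial σ k) :=
  ⨆ b : {b : Fin a → ℕ // Nat.factorial a ≤ ∑ i, (i.1 + 1) * b i},
    ∏ i : Fin a, (derivIdeal^[a - (i.1 + 1)] I) ^ (b.1 i)

/-!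
Write `𝔪_p` for the maximal ideal of `p`, so that `c ≤ ord_p f` means `f ∈ 𝔪_p ^ c` for
`f ≠ 0`. A derivation maps `𝔪_p ^ (c + 1)` into `𝔪_p ^ c`, hence `D^j(I) ≤ 𝔪_p ^ (a - j)` and
every summand of `C(I, a)` lies in `𝔪_p ^ (Σ i b_i) ≤ 𝔪_p ^ a!`. Conversely, an `f ∈ I` of
order `a` gives `f ^ (a-1)! ∈ I ^ (a-1)! ≤ C(I, a)`, of order `(a-1)! * a = a!`, because over a
domain the order is additive, as it is for power series.
-/

open scoped Nat

theorem Derivation.apply_mem_pow_of_mem_pow_succ {R A : Type*} [CommSemiring R] [CommSemiring A]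
    [Algebra R A] (D : Derivation R A A) {I : Ideal A} {n : ℕ} {x : A} (hx : x ∈ I ^ (n + 1)) :
    D x ∈ I ^ n := by
  induction n generalizing x with
  | zero => simp
  | succ n ih =>
    rw [pow_succ] at hx
    refine Submodule.mul_induction_on hx (fun y hy z hz => ?_) fun y z hy hz => ?_
    · rw [D.leibniz, smul_eq_mul, smul_eq_mul]
      exact add_mem (Ideal.mul_mem_right _ _ hy) (pow_succ' I n ▸ Ideal.mul_mem_mul hz (ih hy))
    · rw [map_add]; exact add_mem hy hz

section DerivIdeal

variable {σ R : Type*} [CommSemiring R] {P J : Ideal (MvPolynomial σ R)}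

lemma derivIdeal_le_pow {c : ℕ} (hJ : J ≤ P ^ c) : derivIdeal J ≤ P ^ (c - 1) := by
  obtain _ | c := c
  · simp
  refine sup_le (hJ.trans (Ideal.pow_le_pow_right (Nat.sub_le _ _))) (Ideal.span_le.2 ?_)
  rintro _ ⟨f, hf, i, rfl⟩
  exact (pderiv i).apply_mem_pow_of_mem_pow_succ (hJ hf)

lemma iterate_derivIdeal_le_pow {a : ℕ} (hJ : J ≤ P ^ a) (m : ℕ) :
    derivIdeal^[m] J ≤ P ^ (a - m) := by
  induction m with
  | zero => exact hJ
  | succ m ih => rw [Function.iterate_succ_apply', Nat.sub_add_eq]; exact derivIdeal_le_pow ih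

lemma coeffIdeal_le_pow {a : ℕ} (hJ : J ≤ P ^ a) : coeffIdeal J a ≤ P ^ a ! := by
  refine iSup_le fun ⟨b, hb⟩ => ?_
  calc ∏ i : Fin a, (derivIdeal^[a - (i.1 + 1)] J) ^ b i
      ≤ ∏ i : Fin a, (P ^ (i.1 + 1)) ^ b i := by
        refine Finset.prod_le_prod' fun i _ => pow_le_pow_left' ?_ _
        simpa [Nat.sub_sub_self i.2] using iterate_derivIdeal_le_pow hJ (a - (i.1 + 1))
    _ = P ^ ∑ i : Fin a, (i.1 + 1) * b i := by simp only [← pow_mul, Finset.prod_pow_eq_pow_sum]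
    _ ≤ P ^ a ! := Ideal.pow_le_pow_right hb

lemma pow_le_coeffIdeal {a : ℕ} (ha : 1 ≤ a) : J ^ (a - 1)! ≤ coeffIdeal J a := by
  classical
  let last : Fin a := ⟨a - 1, by omega⟩
  have hb : a ! ≤ ∑ i : Fin a, (i.1 + 1) * (Pi.single last (a - 1)! : Fin a → ℕ) i := by
    simp [Pi.single_apply, last, Nat.sub_add_cancel ha, Nat.mul_factorial_pred (n := a) (by omega)]
  refine le_trans (le_of_eq ?_) (le_iSup _ ⟨_, hb⟩)
  rw [Finset.prod_eq_single last (fun i _ hi => by simp [hi]) (by simp)]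
  simp [last, Nat.sub_add_cancel ha]

end DerivIdeal

namespace MvPolynomial

variable {σ R : Type*} [CommRing R]

noncomputable def translate (p : σ → R) : MvPolynomial σ R ≃ₐ[R] MvPolynomial σ R :=
  AlgEquiv.ofAlgHom (aeval fun i => X i + C (p i)) (aeval fun i => X i - C (p i))
    (by ext i : 1; simp) (by ext i : 1; simp)

noncomputable def pointIdeal (p : σ → R) : Ideal (MvPolynomial σ R) :=
  (idealOfVars σ R).map (translate p).symm

lemma mem_pointIdeal_pow_iff {p : σ → R} {c : ℕ} {f : MvPolynomial σ R} :
    f ∈ pointIdeal p ^ c ↔ translate p f ∈ idealOfVars σ R ^ c := by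
  rw [pointIdeal, ← Ideal.map_pow, Ideal.mem_map_of_equiv]
  constructor
  · rintro ⟨g, hg, rfl⟩; simpa using hg
  · intro h; exact ⟨_, h, by simp⟩

variable (p : σ → R)

lemma polyOrdAt_eq_order {f : MvPolynomial σ R} (hf : f ≠ 0) :
    (polyOrdAt p f : ℕ∞) = (translate p f : MvPowerSeries σ R).order := by
  have hne : {m | ∃ d ∈ (translate p f).support, d.degree = m}.Nonempty := by
    obtain ⟨d, hd⟩ := support_nonempty.2 ((translate p).injective.ne hf)
    exact ⟨_, d, hd, rfl⟩
  refine (MvPowerSeries.order_eq_nat.2 ⟨?_, fun d hd => ?_⟩).symm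
  · obtain ⟨d, hd, hdeg⟩ := Nat.sInf_mem hne
    exact ⟨d, mem_support_iff.1 hd, hdeg⟩
  · by_contra h
    exact Nat.notMem_of_lt_sInf hd ⟨d, mem_support_iff.2 h, rfl⟩

lemma le_polyOrdAt_iff {f : MvPolynomial σ R} (hf : f ≠ 0) {c : ℕ} :
    c ≤ polyOrdAt p f ↔ f ∈ pointIdeal p ^ c := by
  rw [mem_pointIdeal_pow_iff, mem_pow_idealOfVars_iff', ← Nat.cast_le (α := ℕ∞),
    polyOrdAt_eq_order p hf]
  exact ⟨fun h d hd => MvPowerSeries.coeff_of_lt_order ((Nat.cast_lt.2 hd).trans_le h),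
    MvPowerSeries.nat_le_order⟩

lemma polyOrdAt_pow [IsDomain R] {f : MvPolynomial σ R} (hf : f ≠ 0) (N : ℕ) :
    polyOrdAt p (f ^ N) = N * polyOrdAt p f := by
  apply Nat.cast_injective (R := ℕ∞)
  rw [polyOrdAt_eq_order p (pow_ne_zero N hf), Nat.cast_mul, polyOrdAt_eq_order p hf, map_pow,
    coe_pow]
  induction N with
  | zero => rw [pow_zero, Nat.cast_zero, zero_mul]; exact MvPowerSeries.weightedOrder_one _
  | succ N ih => rw [pow_succ, MvPowerSeries.order_mul, ih]; push_cast; ring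

lemma exists_polyOrdAt_eq_idealOrdAt {J : Ideal (MvPolynomial σ R)} (hJ : J ≠ ⊥) :
    ∃ f ∈ J, f ≠ 0 ∧ polyOrdAt p f = idealOrdAt p J := by
  obtain ⟨f, hf, hf0⟩ := (Submodule.ne_bot_iff J).1 hJ
  have hne : {m | ∃ f ∈ J, f ≠ 0 ∧ polyOrdAt p f = m}.Nonempty := ⟨_, f, hf, hf0, rfl⟩
  exact Nat.sInf_mem hne

lemma idealOrdAt_le_polyOrdAt {J : Ideal (MvPolynomial σ R)} {f : MvPolynomial σ R} (hf : f ∈ J)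
    (hf0 : f ≠ 0) : idealOrdAt p J ≤ polyOrdAt p f :=
  Nat.sInf_le ⟨f, hf, hf0, rfl⟩

lemma le_idealOrdAt_iff {J : Ideal (MvPolynomial σ R)} (hJ : J ≠ ⊥) {c : ℕ} :
    c ≤ idealOrdAt p J ↔ J ≤ pointIdeal p ^ c := by
  refine ⟨fun h g hg => ?_, fun h => ?_⟩
  · obtain rfl | hg0 := eq_or_ne g 0
    · exact zero_mem _
    · exact (le_polyOrdAt_iff p hg0).1 (h.trans (idealOrdAt_le_polyOrdAt p hg hg0))
  · obtain ⟨f, hf, hf0, hford⟩ := exists_polyOrdAt_eq_idealOrdAt p hJ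
    exact hford ▸ (le_polyOrdAt_iff p hf0).2 (h hf)

end MvPolynomial

theorem idealOrdAt_coeffIdeal_general {k : Type*} [Field k] {n : ℕ}
    (I : Ideal (MvPolynomial (Fin n) k)) (hI : I ≠ ⊥) (p : Fin n → k) (a : ℕ)
    (ha : 1 ≤ a) (hord : idealOrdAt p I = a) :
    idealOrdAt p (coeffIdeal I a) = Nat.factorial a := by
  obtain ⟨f, hfI, hf0, hf⟩ := exists_polyOrdAt_eq_idealOrdAt p hI
  have hg : f ^ (a - 1)! ∈ coeffIdeal I a := pow_le_coeffIdeal ha (Ideal.pow_mem_pow hfI _)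
  have hg0 : f ^ (a - 1)! ≠ 0 := pow_ne_zero _ hf0
  have hgord : polyOrdAt p (f ^ (a - 1)!) = a ! := by
    rw [polyOrdAt_pow p hf0, hf, hord, mul_comm, Nat.mul_factorial_pred (by omega)]
  have hC : coeffIdeal I a ≤ pointIdeal p ^ a ! :=
    coeffIdeal_le_pow ((le_idealOrdAt_iff p hI).1 hord.ge)
  have hC0 : coeffIdeal I a ≠ ⊥ := (Submodule.ne_bot_iff _).2 ⟨_, hg, hg0⟩
  exact le_antisymm (hgord ▸ idealOrdAt_le_polyOrdAt p hg hg0) ((le_idealOrdAt_iff p hC0).2 hC)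

/-- Order of the coefficient ideal: if `ord_p(I) = a ≥ 1` (char 0), then
`ord_p(C(I,a)) = a!`. -/
theorem idealOrdAt_coeffIdeal {k : Type*} [Field k] [CharZero k] {n : ℕ}
    (I : Ideal (MvPolynomial (Fin n) k)) (hI : I ≠ ⊥) (p : Fin n → k) (a : ℕ)
    (ha : 1 ≤ a) (hord : idealOrdAt p I = a) :
    idealOrdAt p (coeffIdeal I a) = Nat.factorial a :=
  idealOrdAt_coeffIdeal_general I hI p a ha hord
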